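/- Let k₀ ∈ L²([0,1]²) and let L₀ be the associated integral operator on L²([0,1]); assume L₀ is integral-preserving and satisfies the mixing condition (A1), and let f₀ be the unique fixed point of L₀ with ∫ f₀ dm = 1. Then Id − L₀* maps span{f₀}^⊥ := {h ∈ L² : ⟨h, f₀⟩ = 0} bijectively onto itself with bounded inverse: for every c ∈ L² with ⟨c, f₀⟩ = 0 there exists a unique w ∈ L² with ⟨w, f₀⟩ = 0 and w − L₀* w = c, and there exists M ≥ 0 such that ‖w‖₂ ≤ M ‖c‖₂ for every such pair (c, w). Here L₀* denotes the Hilbert adjoint of L₀. -/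

import Mathlib

open MeasureTheory
open scoped RealInnerProductSpace

/-- Lebesgue measure restricted to the unit interval `[0,1]`. -/
noncomputable def μ01 : Measure ℝ := volume.restrict (Set.Icc (0 : ℝ) 1)

/-- Two-dimensional Lebesgue measure restricted to the unit square `[0,1]²`. -/
noncomputable def ν01 : Measure (ℝ × ℝ) := μ01.prod μ01

open Filter Topology

/-! The kernel is square integrable, so `L₀` is a Hilbert–Schmidt operator; hence so is `L₀*`,
which is therefore compact. Since `L₀ f₀ = f₀`, `L₀*` maps `span{f₀}^⊥` into itself, and it has no
nonzero fixed point there: if `L₀* w = w` and `⟪w, f₀⟫ = 0`, then for every `g`,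
`⟪w, g⟫ = ⟪w, L₀ⁿ (g - (∫ g) f₀)⟫`, which tends to `0` by mixing. The Fredholm alternative for
the compact restriction of `L₀*` to `span{f₀}^⊥` then makes `1 - L₀*` invertible there. -/

theorem Orthonormal.starProjection_span_image_apply {𝕜 ι E : Type*} [RCLike 𝕜]
    [NormedAddCommGroup E] [InnerProductSpace 𝕜 E] [DecidableEq ι] [DecidableEq E] {v : ι → E}
    (hv : Orthonormal 𝕜 v) (s : Finset ι) (i : ι) :
    (Submodule.span 𝕜 (s.image v : Set E)).starProjection (v i) = if i ∈ s then v i else 0 := by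
  split_ifs with hi
  · rw [Submodule.starProjection_eq_self_iff]
    exact Submodule.subset_span (Finset.mem_image_of_mem v hi)
  · have hortho : (𝕜 ∙ v i) ⟂ Submodule.span 𝕜 (s.image v : Set E) := by
      rw [Submodule.isOrtho_span]
      rintro _ rfl _ hmem
      obtain ⟨j, hj, rfl⟩ := Finset.mem_image.1 hmem
      exact hv.inner_eq_zero fun hij => hi (hij ▸ hj)
    exact (Submodule.starProjection_apply_eq_zero_iff _).2
      (hortho (Submodule.mem_span_singleton_self _))

namespace HilbertBasis

variable {ι κ E F : Type*} [NormedAddCommGroup E] [InnerProductSpace ℝ E]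
  [NormedAddCommGroup F] [InnerProductSpace ℝ F]

theorem hasSum_inner_sq (b : HilbertBasis ι ℝ E) (x : E) :
    HasSum (fun i => ⟪b i, x⟫ ^ 2) (‖x‖ ^ 2) := by
  simpa [sq, real_inner_comm x, real_inner_self_eq_norm_sq] using b.hasSum_inner_mul_inner x x

theorem opNorm_le_sqrt_of_sum_norm_sq_le (b : HilbertBasis ι ℝ E) (T : E →L[ℝ] F) {D : ℝ}
    (h : ∀ s : Finset ι, ∑ i ∈ s, ‖T (b i)‖ ^ 2 ≤ D) : ‖T‖ ≤ √D := by
  refine T.opNorm_le_bound (Real.sqrt_nonneg D) fun g => ?_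
  have hTg : HasSum (fun i => ⟪b i, g⟫ • T (b i)) (T g) := by
    simpa [b.repr_apply_apply] using (b.hasSum_repr g).mapL T
  refine le_of_tendsto' hTg.norm fun s => ?_
  have hbessel : ∑ i ∈ s, |⟪b i, g⟫| ^ 2 ≤ ‖g‖ ^ 2 := by
    simpa using sum_le_hasSum s (fun i _ => sq_nonneg _) (b.hasSum_inner_sq g)
  calc ‖∑ i ∈ s, ⟪b i, g⟫ • T (b i)‖ ≤ ∑ i ∈ s, |⟪b i, g⟫| * ‖T (b i)‖ := by
        simpa [norm_smul] using norm_sum_le s fun i => ⟪b i, g⟫ • T (b i)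
    _ ≤ √(∑ i ∈ s, |⟪b i, g⟫| ^ 2) * √(∑ i ∈ s, ‖T (b i)‖ ^ 2) :=
        Real.sum_mul_le_sqrt_mul_sqrt _ _ _
    _ ≤ √(‖g‖ ^ 2) * √D := by gcongr; exact h s
    _ = √D * ‖g‖ := by rw [Real.sqrt_sq (norm_nonneg g), mul_comm]

theorem isCompactOperator_of_summable_norm_sq [CompleteSpace F] (b : HilbertBasis ι ℝ E)
    {T : E →L[ℝ] F} (hT : Summable fun i => ‖T (b i)‖ ^ 2) : IsCompactOperator T := by
  classical
  let K (s : Finset ι) : Submodule ℝ E := Submodule.span ℝ (s.image b : Set E)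
  let P (s : Finset ι) : E →L[ℝ] E := (K s).starProjection
  have hP_compact (s : Finset ι) : IsCompactOperator (T ∘L P s) :=
    (isCompactOperator_of_locallyCompactSpace_dom (K s).orthogonalProjectionOnto).clm_comp
      (T ∘L (K s).subtypeL)
  have hP_basis (s : Finset ι) (i : ι) :
      ‖(T - T ∘L P s) (b i)‖ ^ 2 = {i | i ∉ s}.indicator (fun i => ‖T (b i)‖ ^ 2) i := by
    by_cases hi : i ∈ s <;>
      simp [P, K, b.orthonormal.starProjection_span_image_apply, hi, -Finset.coe_image]
  have hP_norm (s : Finset ι) : ‖T - T ∘L P s‖ ≤ √(∑' i : {i // i ∉ s}, ‖T (b i)‖ ^ 2) := by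
    refine b.opNorm_le_sqrt_of_sum_norm_sq_le _ fun t => ?_
    simp only [hP_basis]
    calc _ ≤ ∑' i, {i | i ∉ s}.indicator (fun i => ‖T (b i)‖ ^ 2) i :=
          (hT.indicator _).sum_le_tsum t fun i _ =>
            Set.indicator_nonneg (fun _ _ => sq_nonneg _) i
      _ = _ := (tsum_subtype {i | i ∉ s} _).symm
  refine isCompactOperator_of_tendsto (l := atTop) ?_ (Eventually.of_forall hP_compact)
  rw [tendsto_iff_norm_sub_tendsto_zero]
  refine squeeze_zero (fun s => norm_nonneg _)
    (fun s => (norm_sub_rev _ _).trans_le (hP_norm s)) ?_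
  simpa using (tendsto_tsum_compl_atTop_zero fun i => ‖T (b i)‖ ^ 2).sqrt

theorem summable_norm_sq_adjoint [CompleteSpace E] [CompleteSpace F] (b : HilbertBasis ι ℝ E)
    (c : HilbertBasis κ ℝ F) {T : E →L[ℝ] F} (hT : Summable fun i => ‖T (b i)‖ ^ 2) :
    Summable fun j => ‖ContinuousLinearMap.adjoint T (c j)‖ ^ 2 := by
  refine summable_of_sum_le (c := ∑' i, ‖T (b i)‖ ^ 2) (fun j => sq_nonneg _) fun s => ?_
  have hswap : HasSum (fun i => ∑ j ∈ s, ⟪c j, T (b i)⟫ ^ 2)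
      (∑ j ∈ s, ‖ContinuousLinearMap.adjoint T (c j)‖ ^ 2) := by
    refine hasSum_sum fun j _ => ?_
    simpa [ContinuousLinearMap.adjoint_inner_right, real_inner_comm (c j)] using
      b.hasSum_inner_sq (ContinuousLinearMap.adjoint T (c j))
  have hbessel (i : ι) : ∑ j ∈ s, ⟪c j, T (b i)⟫ ^ 2 ≤ ‖T (b i)‖ ^ 2 :=
    sum_le_hasSum s (fun j _ => sq_nonneg _) (c.hasSum_inner_sq (T (b i)))
  exact hswap.tsum_eq ▸ hswap.summable.tsum_le_tsum hbessel hT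

end HilbertBasis

namespace MeasureTheory.L2

variable {α : Type*} [MeasurableSpace α] {μ : Measure α}

theorem real_inner_eq_integral (f g : Lp ℝ 2 μ) : ⟪f, g⟫ = ∫ x, f x * g x ∂μ := by
  simp [L2.inner_def, mul_comm]

theorem norm_sq_eq_integral_sq (f : Lp ℝ 2 μ) : ‖f‖ ^ 2 = ∫ x, f x ^ 2 ∂μ := by
  rw [← real_inner_self_eq_norm_sq, real_inner_eq_integral]
  simp only [sq]

end MeasureTheory.L2

namespace HilbertBasis

variable {ι α β : Type*} [MeasurableSpace α] [MeasurableSpace β] {μ : Measure α} {ν : Measure β}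

theorem sum_sq_integral_mul_le (b : HilbertBasis ι ℝ (Lp ℝ 2 ν)) {φ : β → ℝ}
    (hφ : MemLp φ 2 ν) (s : Finset ι) :
    ∑ i ∈ s, (∫ y, φ y * b i y ∂ν) ^ 2 ≤ ∫ y, φ y ^ 2 ∂ν := by
  have hinner (i : ι) : ⟪b i, hφ.toLp φ⟫ = ∫ y, φ y * b i y ∂ν := by
    rw [L2.real_inner_eq_integral]
    refine integral_congr_ae ?_
    filter_upwards [hφ.coeFn_toLp] with y hy
    rw [hy, mul_comm]
  have hnorm : ‖hφ.toLp φ‖ ^ 2 = ∫ y, φ y ^ 2 ∂ν := by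
    rw [L2.norm_sq_eq_integral_sq]
    refine integral_congr_ae ?_
    filter_upwards [hφ.coeFn_toLp] with y hy
    rw [hy]
  simpa only [hinner, hnorm] using
    sum_le_hasSum s (fun _ _ => sq_nonneg _) (b.hasSum_inner_sq (hφ.toLp φ))

theorem summable_norm_sq_of_kernel [SFinite μ] [SFinite ν] (b : HilbertBasis ι ℝ (Lp ℝ 2 ν))
    {k : α × β → ℝ} (hk : MemLp k 2 (μ.prod ν)) {L : Lp ℝ 2 ν →L[ℝ] Lp ℝ 2 μ}
    (hL : ∀ f, ∀ᵐ x ∂μ, L f x = ∫ y, k (x, y) * f y ∂ν) :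
    Summable fun i => ‖L (b i)‖ ^ 2 := by
  have hrow : ∀ᵐ x ∂μ, MemLp (fun y => k (x, y)) 2 ν := by
    filter_upwards [hk.aestronglyMeasurable.prodMk_left, hk.integrable_sq.prod_right_ae]
      with x hmeas hsq
    exact (memLp_two_iff_integrable_sq hmeas).2 hsq
  have hL_ae (i : ι) : (fun x => L (b i) x ^ 2) =ᵐ[μ] fun x => (∫ y, k (x, y) * b i y ∂ν) ^ 2 := by
    filter_upwards [hL (b i)] with x hx
    rw [hx]
  have hint (i : ι) : Integrable (fun x => (∫ y, k (x, y) * b i y ∂ν) ^ 2) μ :=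
    (Lp.memLp (L (b i))).integrable_sq.congr (hL_ae i)
  refine summable_of_sum_le (c := ∫ x, ∫ y, k (x, y) ^ 2 ∂ν ∂μ) (fun i => sq_nonneg _)
    fun s => ?_
  simp only [L2.norm_sq_eq_integral_sq, integral_congr_ae (hL_ae _)]
  rw [← integral_finsetSum s fun i _ => hint i]
  refine integral_mono_ae (integrable_finsetSum s fun i _ => hint i)
    hk.integrable_sq.integral_prod_left ?_
  filter_upwards [hrow] with x hx
  exact b.sum_sq_integral_mul_le hx s

end HilbertBasis

section Mixing

variable {α : Type*} [MeasurableSpace α] {μ : Measure α} [IsFiniteMeasure μ]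

theorem integral_sub_integral_smul_eq_zero (g f₀ : Lp ℝ 2 μ) (hf₀ : ∫ x, f₀ x ∂μ = 1) :
    ∫ x, (g - (∫ y, g y ∂μ) • f₀) x ∂μ = 0 := by
  set a := ∫ y, g y ∂μ
  have hint (f : Lp ℝ 2 μ) : Integrable f μ := (Lp.memLp f).integrable one_le_two
  have hcoe : ⇑(g - a • f₀) =ᵐ[μ] fun x => g x - a * f₀ x := by
    filter_upwards [Lp.coeFn_sub g (a • f₀), Lp.coeFn_smul a f₀] with x hsub hsmul
    rw [hsub, Pi.sub_apply, hsmul, Pi.smul_apply, smul_eq_mul]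
  rw [integral_congr_ae hcoe, integral_sub (hint g) ((hint f₀).const_mul a), integral_const_mul,
    hf₀, mul_one, sub_self]

theorem eq_zero_of_adjoint_apply_eq_self {L : Lp ℝ 2 μ →L[ℝ] Lp ℝ 2 μ}
    (hmix : ∀ g : Lp ℝ 2 μ, ∫ x, g x ∂μ = 0 → Tendsto (fun n : ℕ => ‖(L ^ n) g‖) atTop (𝓝 0))
    {f₀ : Lp ℝ 2 μ} (hf₀ : ∫ x, f₀ x ∂μ = 1) {w : Lp ℝ 2 μ} (hw : ⟪w, f₀⟫ = 0)
    (hfix : ContinuousLinearMap.adjoint L w = w) : w = 0 := by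
  have hpow (n : ℕ) (g : Lp ℝ 2 μ) : ⟪w, (L ^ n) g⟫ = ⟪w, g⟫ := by
    induction n with
    | zero => simp
    | succ n ih =>
      rw [pow_succ', mul_apply_eq_comp, ← ContinuousLinearMap.adjoint_inner_left,
        hfix, ih]
  have hperp (g : Lp ℝ 2 μ) : ⟪w, g⟫ = 0 := by
    set g₀ := g - (∫ x, g x ∂μ) • f₀
    have hlim : Tendsto (fun n : ℕ => ⟪w, (L ^ n) g₀⟫) atTop (𝓝 0) :=
      squeeze_zero_norm (fun n => norm_inner_le_norm _ _)
        (by simpa using (hmix g₀ (integral_sub_integral_smul_eq_zero g f₀ hf₀)).const_mul ‖w‖)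
    simp only [hpow] at hlim
    simpa [g₀, inner_sub_right, real_inner_smul_right, hw] using
      tendsto_nhds_unique tendsto_const_nhds hlim
  exact inner_self_eq_zero.1 (hperp w)

end Mixing

namespace IsCompactOperator

variable {𝕜 E : Type*} [NontriviallyNormedField 𝕜] [NormedAddCommGroup E] [NormedSpace 𝕜 E]
  [CompleteSpace E] {T : E →L[𝕜] E}

theorem existsUnique_sub_apply_eq_and_norm_le (hT : IsCompactOperator T) {K : Submodule 𝕜 E}
    (hK : IsClosed (K : Set E)) (hTK : ∀ w ∈ K, T w ∈ K) (hfix : ∀ w ∈ K, T w = w → w = 0) :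
    (∀ c ∈ K, ∃! w, w ∈ K ∧ w - T w = c) ∧ ∃ M, 0 ≤ M ∧ ∀ w ∈ K, ‖w‖ ≤ M * ‖w - T w‖ := by
  have : CompleteSpace K := completeSpace_coe_iff_isComplete.2 hK.isComplete
  set S : K →L[𝕜] K := T.restrict hTK
  have hS : IsCompactOperator S := hT.restrict (f := (T : E →ₗ[𝕜] E)) hTK hK
  have hno_fixed : ¬ Module.End.HasEigenvalue (S : Module.End 𝕜 K) 1 := fun h => by
    obtain ⟨x, hx⟩ := h.exists_hasEigenvector
    have hTx := congrArg Subtype.val hx.apply_eq_smul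
    rw [one_smul] at hTx
    exact hx.2 (Subtype.ext (hfix x x.2 hTx))
  have hunit : IsUnit (1 - S) := by
    simpa [spectrum.mem_resolventSet_iff] using
      (hS.hasEigenvalue_or_mem_resolventSet one_ne_zero).resolve_left hno_fixed
  let e : K ≃L[𝕜] K := ContinuousLinearEquiv.unitsEquiv 𝕜 K hunit.unit
  have he (w : K) : (e w : E) = w - T w := rfl
  refine ⟨fun c hc => ⟨e.symm ⟨c, hc⟩, ⟨(e.symm _).2, by rw [← he, e.apply_symm_apply]⟩, ?_⟩,
    ‖(e.symm : K →L[𝕜] K)‖, norm_nonneg _, fun w hw => ?_⟩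
  · rintro w ⟨hw, hwc⟩
    exact congrArg Subtype.val (e.eq_symm_apply.2 (Subtype.ext ((he ⟨w, hw⟩).trans hwc)))
  · calc ‖w‖ = ‖e.symm (e ⟨w, hw⟩)‖ := by rw [e.symm_apply_apply]; rfl
      _ ≤ ‖(e.symm : K →L[𝕜] K)‖ * ‖e ⟨w, hw⟩‖ := (e.symm : K →L[𝕜] K).le_opNorm _
      _ = ‖(e.symm : K →L[𝕜] K)‖ * ‖w - T w‖ := congrArg (_ * ‖·‖) (he ⟨w, hw⟩)

end IsCompactOperator

instance : IsFiniteMeasure μ01 := ⟨by simp [μ01]⟩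

theorem adjoint_resolvent_bijective_bounded_general
    (k₀ : ℝ × ℝ → ℝ) (hk₀L2 : MemLp k₀ 2 ν01)
    (L₀ : Lp ℝ 2 μ01 →L[ℝ] Lp ℝ 2 μ01)
    (hL₀ : ∀ f : Lp ℝ 2 μ01, ∀ᵐ x ∂μ01, (L₀ f) x = ∫ y, k₀ (x, y) * f y ∂μ01)
    (hmix : ∀ g : Lp ℝ 2 μ01, (∫ x, g x ∂μ01) = 0 →
      Filter.Tendsto (fun n : ℕ => ‖(L₀ ^ n) g‖) Filter.atTop (nhds 0))
    (f₀ : Lp ℝ 2 μ01) (hf₀fix : L₀ f₀ = f₀) (hf₀int : ∫ x, f₀ x ∂μ01 = 1) :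
    (∀ c : Lp ℝ 2 μ01, ⟪c, f₀⟫ = 0 →
      ∃! w : Lp ℝ 2 μ01, ⟪w, f₀⟫ = 0 ∧
        w - (ContinuousLinearMap.adjoint L₀) w = c) ∧
    (∃ M : ℝ, 0 ≤ M ∧ ∀ c w : Lp ℝ 2 μ01,
      ⟪c, f₀⟫ = 0 → ⟪w, f₀⟫ = 0 →
        w - (ContinuousLinearMap.adjoint L₀) w = c → ‖w‖ ≤ M * ‖c‖) := by
  obtain ⟨_, b, -⟩ := exists_hilbertBasis ℝ (Lp ℝ 2 μ01)
  have hcompact : IsCompactOperator (ContinuousLinearMap.adjoint L₀) :=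
    b.isCompactOperator_of_summable_norm_sq
      (b.summable_norm_sq_adjoint b (b.summable_norm_sq_of_kernel hk₀L2 hL₀))
  have hinvariant : ∀ w ∈ (ℝ ∙ f₀)ᗮ, ContinuousLinearMap.adjoint L₀ w ∈ (ℝ ∙ f₀)ᗮ := by
    simp only [Submodule.mem_orthogonal_singleton_iff_inner_left,
      ContinuousLinearMap.adjoint_inner_left, hf₀fix, imp_self, implies_true]
  have hno_fixed : ∀ w ∈ (ℝ ∙ f₀)ᗮ, ContinuousLinearMap.adjoint L₀ w = w → w = 0 :=
    fun w hw => eq_zero_of_adjoint_apply_eq_self hmix hf₀int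
      (Submodule.mem_orthogonal_singleton_iff_inner_left.1 hw)
  obtain ⟨hbij, M, hM, hbound⟩ := hcompact.existsUnique_sub_apply_eq_and_norm_le
    (Submodule.isClosed_orthogonal _) hinvariant hno_fixed
  simp only [Submodule.mem_orthogonal_singleton_iff_inner_left] at hbij hbound
  exact ⟨hbij, M, hM, fun c w _ hw hwc => hwc ▸ hbound w hw⟩

/-- For the integral operator `L₀` of an `L²` kernel which is
integral-preserving and mixing, with unique normalized fixed point `f₀`, the
operator `Id − L₀*` maps `span{f₀}^⊥` bijectively onto itself with bounded
inverse. -/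
theorem adjoint_resolvent_bijective_bounded
    (k₀ : ℝ × ℝ → ℝ) (hk₀L2 : MemLp k₀ 2 ν01)
    (L₀ : Lp ℝ 2 μ01 →L[ℝ] Lp ℝ 2 μ01)
    (hL₀ : ∀ f : Lp ℝ 2 μ01, ∀ᵐ x ∂μ01, (L₀ f) x = ∫ y, k₀ (x, y) * f y ∂μ01)
    (hint : ∀ g : Lp ℝ 2 μ01, ∫ x, (L₀ g) x ∂μ01 = ∫ x, g x ∂μ01)
    (hmix : ∀ g : Lp ℝ 2 μ01, (∫ x, g x ∂μ01) = 0 →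
      Filter.Tendsto (fun n : ℕ => ‖(L₀ ^ n) g‖) Filter.atTop (nhds 0))
    (f₀ : Lp ℝ 2 μ01) (hf₀fix : L₀ f₀ = f₀) (hf₀int : ∫ x, f₀ x ∂μ01 = 1) :
    (∀ c : Lp ℝ 2 μ01, ⟪c, f₀⟫ = 0 →
      ∃! w : Lp ℝ 2 μ01, ⟪w, f₀⟫ = 0 ∧
        w - (ContinuousLinearMap.adjoint L₀) w = c) ∧
    (∃ M : ℝ, 0 ≤ M ∧ ∀ c w : Lp ℝ 2 μ01,
      ⟪c, f₀⟫ = 0 → ⟪w, f₀⟫ = 0 →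
        w - (ContinuousLinearMap.adjoint L₀) w = c → ‖w‖ ≤ M * ‖c‖) :=
  adjoint_resolvent_bijective_bounded_general k₀ hk₀L2 L₀ hL₀ hmix f₀ hf₀fix hf₀int
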